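/- arXiv:1507.04404 — 2 statements merged into one kernel-verified Lean document; each statement's English description precedes it below -/
import Mathlib

section
/- Let f ∈ ℝ[x₁,…,xₙ] be a polynomial and let x* ∈ [0,1]^n be a global minimizer of f over [0,1]^n. Then there exist a constant M_f > 0 and an integer k₁ ≥ 1 (depending only on f and x*) such that f_k^H − f(x*) ≤ M_f/√k for all integers k ≥ k₁. -/
open MvPolynomial MeasureTheory Finset intervalIntegral


noncomputable def Bval (a b : ℕ) : ℝ :=
  (Nat.factorial a : ℝ) * (Nat.factorial b) / (Nat.factorial (a + b + 1))

lemma Bval_pos (a b : ℕ) : 0 < Bval a b := by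
  unfold Bval
  positivity

lemma intervalIntegral_beta (b : ℕ) : ∀ a : ℕ,
    ∫ x in (0:ℝ)..1, x ^ a * (1 - x) ^ b = Bval a b := by
  induction b with
  | zero =>
    intro a
    simp only [pow_zero, mul_one, integral_pow, one_pow]
    rw [zero_pow (by omega : a + 1 ≠ 0)]
    unfold Bval
    rw [div_eq_div_iff (by positivity) (by positivity)]
    push_cast [Nat.factorial_succ, Nat.factorial_zero, Nat.add_zero]
    ring
  | succ b ih =>
    intro a
    have ha : ((a : ℝ) + 1) ≠ 0 := by positivity
    have hu : ∀ x ∈ Set.uIcc (0:ℝ) 1, HasDerivAt (fun y : ℝ => (1 - y) ^ (b + 1))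
        (-((b + 1 : ℝ) * (1 - x) ^ b)) x := by
      intro x _
      have h1 : HasDerivAt (fun y : ℝ => 1 - y) (-1) x := by
        simpa using (hasDerivAt_id x).const_sub 1
      have := h1.fun_pow (b + 1)
      simpa [mul_comm, Nat.add_sub_cancel] using this
    have hv : ∀ x ∈ Set.uIcc (0:ℝ) 1, HasDerivAt (fun y : ℝ => y ^ (a + 1) / (a + 1))
        (x ^ a) x := by
      intro x _
      have := (hasDerivAt_pow (a + 1) x).div_const ((a : ℝ) + 1)
      have h2 : ((a:ℝ)+1) * x ^ a / ((a:ℝ)+1) = x ^ a := by field_simp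
      simpa [Nat.add_sub_cancel, h2] using this
    have hiu : IntervalIntegrable (fun x : ℝ => -((b + 1 : ℝ) * (1 - x) ^ b)) volume 0 1 :=
      (Continuous.intervalIntegrable (by continuity) 0 1)
    have hiv : IntervalIntegrable (fun x : ℝ => x ^ a) volume 0 1 :=
      (Continuous.intervalIntegrable (by continuity) 0 1)
    have IBP := intervalIntegral.integral_mul_deriv_eq_deriv_mul hu hv hiu hiv
    have key : ∫ x in (0:ℝ)..1, x ^ a * (1 - x) ^ (b + 1)
        = ((b : ℝ) + 1) / ((a : ℝ) + 1) * ∫ x in (0:ℝ)..1, x ^ (a + 1) * (1 - x) ^ b := by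
      have h1 : (∫ x in (0:ℝ)..1, (1 - x) ^ (b + 1) * x ^ a)
          = - ∫ x in (0:ℝ)..1, -((b + 1 : ℝ) * (1 - x) ^ b) * (x ^ (a + 1) / (a + 1)) := by
        simpa using IBP
      calc ∫ x in (0:ℝ)..1, x ^ a * (1 - x) ^ (b + 1)
          = ∫ x in (0:ℝ)..1, (1 - x) ^ (b + 1) * x ^ a := by
            congr 1; funext x; ring
        _ = - ∫ x in (0:ℝ)..1, -((b + 1 : ℝ) * (1 - x) ^ b) * (x ^ (a + 1) / (a + 1)) := h1
        _ = ∫ x in (0:ℝ)..1, ((b : ℝ) + 1) / ((a : ℝ) + 1) * (x ^ (a + 1) * (1 - x) ^ b) := by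
            rw [← intervalIntegral.integral_neg]
            congr 1; funext x; field_simp
        _ = ((b : ℝ) + 1) / ((a : ℝ) + 1) * ∫ x in (0:ℝ)..1, x ^ (a + 1) * (1 - x) ^ b := by
            rw [intervalIntegral.integral_const_mul]
    rw [key, ih (a + 1)]
    unfold Bval
    have h2 : a + 1 + b + 1 = a + (b + 1) + 1 := by omega
    rw [h2]
    rw [div_mul_div_comm, eq_div_iff (by positivity), div_mul_eq_mul_div,
      div_eq_iff (by positivity)]
    push_cast [Nat.factorial_succ]
    ring

lemma setIntegral_beta (a b : ℕ) :
    ∫ x in Set.Icc (0:ℝ) 1, x ^ a * (1 - x) ^ b = Bval a b := by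
  rw [MeasureTheory.integral_Icc_eq_integral_Ioc,
    ← intervalIntegral.integral_of_le (zero_le_one), intervalIntegral_beta]

/-- moment ratio -/
noncomputable def mratio (e b a : ℕ) : ℝ :=
  ∏ j ∈ Finset.range a, ((e : ℝ) + 1 + j) / ((e : ℝ) + b + 2 + j)

lemma Bval_shift (e b : ℕ) : ∀ a : ℕ, Bval (e + a) b = mratio e b a * Bval e b := by
  intro a
  induction a with
  | zero => simp [mratio]
  | succ a ih =>
    have h1 : Bval (e + (a + 1)) b = ((e : ℝ) + 1 + a) / ((e : ℝ) + b + 2 + a) * Bval (e + a) b := by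
      unfold Bval
      have f1 : (e + (a + 1)) = (e + a) + 1 := by omega
      have f2 : (e + a + 1 + b + 1) = (e + a + b + 1) + 1 := by omega
      rw [f1, f2, Nat.factorial_succ, Nat.factorial_succ]
      have h3 : ((Nat.factorial (e + a + b + 1) : ℝ)) ≠ 0 := by positivity
      have h4 : ((e : ℝ) + b + 2 + a) ≠ 0 := by positivity
      have h5 : ((e : ℝ) + a + 1) ≠ 0 := by positivity
      push_cast
      field_simp
      ring
    rw [h1, ih]
    simp only [mratio, Finset.prod_range_succ]
    push_cast
    ring

lemma mratio_mem (e b a : ℕ) : mratio e b a ∈ Set.Icc (0:ℝ) 1 := by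
  constructor
  · apply Finset.prod_nonneg; intro j _; positivity
  · apply Finset.prod_le_one
    · intro j _; positivity
    · intro j _
      apply div_le_one_of_le₀ <;> [skip; positivity]
      have : (0:ℝ) ≤ (b:ℝ) + 1 := by positivity
      linarith

lemma abs_prod_sub_prod {ι : Type*} [DecidableEq ι] (s : Finset ι) (u v : ι → ℝ)
    (hu : ∀ i ∈ s, u i ∈ Set.Icc (0:ℝ) 1) (hv : ∀ i ∈ s, v i ∈ Set.Icc (0:ℝ) 1) :
    |∏ i ∈ s, u i - ∏ i ∈ s, v i| ≤ ∑ i ∈ s, |u i - v i| := by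
  induction s using Finset.induction with
  | empty => simp
  | @insert a s ha ih =>
    rw [Finset.prod_insert ha, Finset.prod_insert ha, Finset.sum_insert ha]
    have hus : ∀ i ∈ s, u i ∈ Set.Icc (0:ℝ) 1 := fun i hi => hu i (Finset.mem_insert_of_mem hi)
    have hvs : ∀ i ∈ s, v i ∈ Set.Icc (0:ℝ) 1 := fun i hi => hv i (Finset.mem_insert_of_mem hi)
    have hPu : ∏ i ∈ s, u i ∈ Set.Icc (0:ℝ) 1 :=
      ⟨Finset.prod_nonneg fun i hi => (hus i hi).1,
       Finset.prod_le_one (fun i hi => (hus i hi).1) (fun i hi => (hus i hi).2)⟩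
    have hPv : ∏ i ∈ s, v i ∈ Set.Icc (0:ℝ) 1 :=
      ⟨Finset.prod_nonneg fun i hi => (hvs i hi).1,
       Finset.prod_le_one (fun i hi => (hvs i hi).1) (fun i hi => (hvs i hi).2)⟩
    have hua := hu a (Finset.mem_insert_self a s)
    have hva := hv a (Finset.mem_insert_self a s)
    calc |u a * ∏ i ∈ s, u i - v a * ∏ i ∈ s, v i|
        = |u a * (∏ i ∈ s, u i - ∏ i ∈ s, v i) + (u a - v a) * ∏ i ∈ s, v i| := by ring_nf
      _ ≤ |u a * (∏ i ∈ s, u i - ∏ i ∈ s, v i)| + |(u a - v a) * ∏ i ∈ s, v i| := abs_add_le _ _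
      _ ≤ |∏ i ∈ s, u i - ∏ i ∈ s, v i| + |u a - v a| := by
          rw [abs_mul, abs_mul]
          have h1 : |u a| ≤ 1 := abs_le.mpr ⟨by linarith [hua.1], hua.2⟩
          have h2 : |∏ i ∈ s, v i| ≤ 1 := abs_le.mpr ⟨by linarith [hPv.1], hPv.2⟩
          have h3 : (0:ℝ) ≤ |∏ i ∈ s, u i - ∏ i ∈ s, v i| := abs_nonneg _
          have h4 : (0:ℝ) ≤ |u a - v a| := abs_nonneg _
          nlinarith
      _ ≤ (∑ i ∈ s, |u i - v i|) + |u a - v a| := by linarith [ih hus hvs]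
      _ = |u a - v a| + ∑ i ∈ s, |u i - v i| := by ring

lemma cube_prod_integral {n : ℕ} (g : Fin n → ℝ → ℝ) (hg : ∀ i, Continuous (g i)) :
    ∫ x in Set.Icc (0 : Fin n → ℝ) 1, ∏ i, g i (x i)
      = ∏ i, ∫ t in Set.Icc (0:ℝ) 1, g i t := by
  rw [← MeasureTheory.integral_indicator measurableSet_Icc]
  have hind : (Set.Icc (0 : Fin n → ℝ) 1).indicator (fun x => ∏ i, g i (x i))
      = fun x => ∏ i, (Set.Icc (0:ℝ) 1).indicator (g i) (x i) := by
    funext x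
    by_cases hx : x ∈ Set.Icc (0 : Fin n → ℝ) 1
    · rw [Set.indicator_of_mem hx]
      have hxi : ∀ i, x i ∈ Set.Icc (0:ℝ) 1 := fun i => ⟨hx.1 i, hx.2 i⟩
      exact Finset.prod_congr rfl fun i _ => (Set.indicator_of_mem (hxi i) _).symm
    · rw [Set.indicator_of_notMem hx]
      obtain ⟨i, hi⟩ : ∃ i, x i ∉ Set.Icc (0:ℝ) 1 := by
        by_contra h
        push_neg at h
        exact hx ⟨fun i => (h i).1, fun i => (h i).2⟩
      exact (Finset.prod_eq_zero (Finset.mem_univ i)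
        (Set.indicator_of_notMem hi _)).symm
  rw [hind, MeasureTheory.integral_fintype_prod_volume_eq_prod
    (fun i t => (Set.Icc (0:ℝ) 1).indicator (g i) t)]
  exact Finset.prod_congr rfl fun i _ =>
    MeasureTheory.integral_indicator measurableSet_Icc

/-- the key per-coordinate estimate -/
lemma coord_bound (D a : ℕ) {x : ℝ} (hx0 : 0 ≤ x) (hx1 : x ≤ 1) :
    |mratio (⌊(D : ℝ) * x⌋₊) (D - ⌊(D : ℝ) * x⌋₊) a - x ^ a|
      ≤ 2 * ((a : ℝ) + 1) ^ 2 / ((D : ℝ) + 2) := by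
  set e : ℕ := ⌊(D : ℝ) * x⌋₊ with he
  have heD : e ≤ D := by
    have : (D : ℝ) * x ≤ (D : ℝ) := by nlinarith
    calc e ≤ ⌊(D : ℝ)⌋₊ := Nat.floor_le_floor this
      _ = D := Nat.floor_natCast D
  have hfl : (e : ℝ) ≤ (D : ℝ) * x := Nat.floor_le (by positivity)
  have hfl2 : (D : ℝ) * x - 1 < (e : ℝ) := Nat.sub_one_lt_floor _
  have hb : ((D - e : ℕ) : ℝ) = (D : ℝ) - e := by
    push_cast [Nat.cast_sub heD]; ring
  have hden : ∀ j : ℕ, (0:ℝ) < (e : ℝ) + ((D - e : ℕ) : ℝ) + 2 + j := by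
    intro j; rw [hb]
    have h1 : (0:ℝ) ≤ j := Nat.cast_nonneg j
    have h2 : (0:ℝ) ≤ e := Nat.cast_nonneg e
    have h3 : (0:ℝ) ≤ D := Nat.cast_nonneg D
    linarith
  -- rewrite x^a as a product
  have hxpow : x ^ a = ∏ _j ∈ Finset.range a, x := by
    rw [Finset.prod_const, Finset.card_range]
  rw [mratio, hxpow]
  have key := abs_prod_sub_prod (Finset.range a)
    (fun j => ((e : ℝ) + 1 + j) / ((e : ℝ) + ((D - e : ℕ) : ℝ) + 2 + j))
    (fun _j => x) ?_ ?_
  · refine key.trans ?_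
    have hterm : ∀ j ∈ Finset.range a,
        |((e : ℝ) + 1 + j) / ((e : ℝ) + ((D - e : ℕ) : ℝ) + 2 + j) - x|
          ≤ 2 * ((a : ℝ) + 1) / ((D : ℝ) + 2) := by
      intro j hj
      have hj' : (j : ℝ) ≤ (a : ℝ) - 1 := by
        have := Finset.mem_range.mp hj
        have : (j : ℝ) + 1 ≤ a := by exact_mod_cast this
        linarith
      have hd : (e : ℝ) + ((D - e : ℕ) : ℝ) + 2 + j = (D : ℝ) + 2 + j := by
        rw [hb]; ring
      rw [hd]
      have hDj : (0:ℝ) < (D : ℝ) + 2 + j := by positivity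
      have hnum : |((e : ℝ) + 1 + j) - x * ((D : ℝ) + 2 + j)| ≤ (a : ℝ) + 1 := by
        rw [abs_le]
        constructor
        · nlinarith
        · nlinarith
      have heq : ((e : ℝ) + 1 + j) / ((D : ℝ) + 2 + j) - x
          = (((e : ℝ) + 1 + j) - x * ((D : ℝ) + 2 + j)) / ((D : ℝ) + 2 + j) := by
        field_simp
      rw [heq, abs_div, abs_of_pos hDj]
      calc |((e : ℝ) + 1 + j) - x * ((D : ℝ) + 2 + j)| / ((D : ℝ) + 2 + j)
          ≤ ((a : ℝ) + 1) / ((D : ℝ) + 2) := by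
            apply div_le_div₀ (by positivity) hnum (by positivity)
            linarith [Nat.cast_nonneg (α := ℝ) j]
        _ ≤ 2 * ((a : ℝ) + 1) / ((D : ℝ) + 2) := by
            rw [div_le_div_iff₀ (by positivity) (by positivity)]
            nlinarith [Nat.cast_nonneg (α := ℝ) a, Nat.cast_nonneg (α := ℝ) D]
    calc ∑ j ∈ Finset.range a,
          |((e : ℝ) + 1 + j) / ((e : ℝ) + ((D - e : ℕ) : ℝ) + 2 + j) - x|
        ≤ ∑ _j ∈ Finset.range a, 2 * ((a : ℝ) + 1) / ((D : ℝ) + 2) :=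
          Finset.sum_le_sum hterm
      _ = (a : ℝ) * (2 * ((a : ℝ) + 1) / ((D : ℝ) + 2)) := by
          rw [Finset.sum_const, Finset.card_range, nsmul_eq_mul]
      _ ≤ 2 * ((a : ℝ) + 1) ^ 2 / ((D : ℝ) + 2) := by
          have h2 : (a:ℝ) * (2 * ((a:ℝ) + 1) / ((D:ℝ) + 2))
              = ((a:ℝ) * (2 * ((a:ℝ) + 1))) / ((D:ℝ) + 2) := by ring
          rw [h2, div_le_div_iff₀ (by positivity) (by positivity)]
          nlinarith [Nat.cast_nonneg (α := ℝ) a, Nat.cast_nonneg (α := ℝ) D]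
  · intro j _
    constructor
    · have := hden j; positivity
    · apply div_le_one_of_le₀
      · rw [hb]
        have : (e:ℝ) ≤ D := by exact_mod_cast heD
        linarith
      · exact (hden j).le
  · intro j _
    exact ⟨hx0, hx1⟩

lemma W_cont {n : ℕ} (η β : Fin n → ℕ) :
    Continuous (fun x : Fin n → ℝ => ∏ i, x i ^ η i * (1 - x i) ^ β i) :=
  continuous_finset_prod _ fun i _ =>
    ((continuous_apply i).pow _).mul ((continuous_const.sub (continuous_apply i)).pow _)

lemma denom_eq {n : ℕ} (η β : Fin n → ℕ) :
    (∫ x in Set.Icc (0 : Fin n → ℝ) 1, ∏ i, x i ^ η i * (1 - x i) ^ β i)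
      = ∏ i, Bval (η i) (β i) := by
  rw [cube_prod_integral (fun i t => t ^ η i * (1 - t) ^ β i)
    (fun i => (continuous_id.pow _).mul ((continuous_const.sub continuous_id).pow _))]
  exact Finset.prod_congr rfl fun i _ => setIntegral_beta _ _

lemma numer_eq {n : ℕ} (f : MvPolynomial (Fin n) ℝ) (η β : Fin n → ℕ) :
    (∫ x in Set.Icc (0 : Fin n → ℝ) 1, eval x f * ∏ i, x i ^ η i * (1 - x i) ^ β i)
      = ∑ α ∈ f.support, coeff α f * ∏ i, Bval (η i + α i) (β i) := by
  have hfun : (fun x : Fin n → ℝ => eval x f * ∏ i, x i ^ η i * (1 - x i) ^ β i)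
      = fun x => ∑ α ∈ f.support,
          coeff α f * ∏ i, x i ^ (η i + α i) * (1 - x i) ^ β i := by
    funext x
    rw [eval_eq', Finset.sum_mul]
    refine Finset.sum_congr rfl fun α _ => ?_
    rw [mul_assoc, ← Finset.prod_mul_distrib]
    congr 1
    refine Finset.prod_congr rfl fun i _ => ?_
    rw [pow_add]; ring
  rw [hfun, MeasureTheory.integral_finset_sum]
  · refine Finset.sum_congr rfl fun α _ => ?_
    rw [MeasureTheory.integral_const_mul,
      cube_prod_integral (fun i t => t ^ (η i + α i) * (1 - t) ^ β i)
        (fun i => (continuous_id.pow _).mul ((continuous_const.sub continuous_id).pow _))]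
    congr 1
    exact Finset.prod_congr rfl fun i _ => setIntegral_beta _ _
  · intro α _
    exact (Continuous.integrableOn_Icc (continuous_const.mul (W_cont (fun i => η i + α i) β)))

lemma lower_bound {n : ℕ} (f : MvPolynomial (Fin n) ℝ) (xstar : Fin n → ℝ)
    (hmin : ∀ x ∈ Set.Icc (0 : Fin n → ℝ) 1, eval xstar f ≤ eval x f) (η β : Fin n → ℕ) :
    eval xstar f ≤
      (∫ x in Set.Icc (0 : Fin n → ℝ) 1, eval x f * ∏ i, x i ^ η i * (1 - x i) ^ β i) /
      (∫ x in Set.Icc (0 : Fin n → ℝ) 1, ∏ i, x i ^ η i * (1 - x i) ^ β i) := by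
  set c : ℝ := eval xstar f
  have hW : (∫ x in Set.Icc (0 : Fin n → ℝ) 1, ∏ i, x i ^ η i * (1 - x i) ^ β i)
      = ∏ i, Bval (η i) (β i) := denom_eq η β
  have hWpos : 0 < ∫ x in Set.Icc (0 : Fin n → ℝ) 1, ∏ i, x i ^ η i * (1 - x i) ^ β i := by
    rw [hW]; exact Finset.prod_pos fun i _ => Bval_pos _ _
  rw [le_div_iff₀ hWpos]
  have hint1 : IntegrableOn
      (fun x : Fin n → ℝ => eval x f * ∏ i, x i ^ η i * (1 - x i) ^ β i)
      (Set.Icc 0 1) := Continuous.integrableOn_Icc ((f.continuous_eval).mul (W_cont η β))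
  have hint2 : IntegrableOn (fun x : Fin n → ℝ => c * ∏ i, x i ^ η i * (1 - x i) ^ β i)
      (Set.Icc 0 1) := Continuous.integrableOn_Icc (continuous_const.mul (W_cont η β))
  have hnn : 0 ≤ ∫ x in Set.Icc (0 : Fin n → ℝ) 1,
      (eval x f * ∏ i, x i ^ η i * (1 - x i) ^ β i
        - c * ∏ i, x i ^ η i * (1 - x i) ^ β i) := by
    apply MeasureTheory.setIntegral_nonneg measurableSet_Icc
    intro x hxm
    have hWnn : 0 ≤ ∏ i, x i ^ η i * (1 - x i) ^ β i := by
      apply Finset.prod_nonneg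
      intro i _
      have h1 : (0:ℝ) ≤ x i := hxm.1 i
      have h2 : x i ≤ 1 := hxm.2 i
      have h3 : (0:ℝ) ≤ 1 - x i := by linarith
      positivity
    have := hmin x hxm
    nlinarith
  rw [MeasureTheory.integral_sub hint1 hint2, MeasureTheory.integral_const_mul] at hnn
  linarith

lemma coord_bound' (D a e b : ℕ) {x : ℝ} (hx0 : 0 ≤ x) (hx1 : x ≤ 1)
    (he : e = ⌊(D : ℝ) * x⌋₊) (hb : b = D - e) :
    |mratio e b a - x ^ a| ≤ 2 * ((a : ℝ) + 1) ^ 2 / ((D : ℝ) + 2) := by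
  subst hb; subst he; exact coord_bound D a hx0 hx1

/-- The upper bound `f_k^H` on the hypercube `[0,1]^n`. -/
noncomputable def fkH (n : ℕ) (f : MvPolynomial (Fin n) ℝ) (k : ℕ) : ℝ :=
  sInf { r : ℝ | ∃ η β : Fin n → ℕ, (∑ i, η i) + (∑ i, β i) = k ∧
    r = (∫ x in Set.Icc (0 : Fin n → ℝ) 1,
            eval x f * ∏ i, x i ^ η i * (1 - x i) ^ β i) /
        (∫ x in Set.Icc (0 : Fin n → ℝ) 1, ∏ i, x i ^ η i * (1 - x i) ^ β i) }

theorem fkH_rate_sqrt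
    {n : ℕ} (hn : 1 ≤ n) (f : MvPolynomial (Fin n) ℝ) (xstar : Fin n → ℝ)
    (hx : xstar ∈ Set.Icc (0 : Fin n → ℝ) 1)
    (hmin : ∀ x ∈ Set.Icc (0 : Fin n → ℝ) 1, eval xstar f ≤ eval x f) :
    ∃ (M : ℝ) (k₁ : ℕ), 0 < M ∧ 1 ≤ k₁ ∧ ∀ k : ℕ, k₁ ≤ k →
      fkH n f k - eval xstar f ≤ M / Real.sqrt k := by
  classical
  have hx0 : ∀ i, 0 ≤ xstar i := fun i => hx.1 i
  have hx1 : ∀ i, xstar i ≤ 1 := fun i => hx.2 i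
  set c : ℝ := eval xstar f with hc
  set C : ℝ := ∑ α ∈ f.support, |coeff α f| *
      ∑ i, 2 * ((α i : ℝ) + 1) ^ 2 * (2 * n) with hCdef
  have hC0 : 0 ≤ C :=
    Finset.sum_nonneg fun α _ => mul_nonneg (abs_nonneg _)
      (Finset.sum_nonneg fun i _ => by positivity)
  refine ⟨C + 1, 2 * n, by linarith, by omega, ?_⟩
  intro k hk
  have hn0 : 0 < n := hn
  have hk0 : 0 < k := by omega
  obtain ⟨i0⟩ : Nonempty (Fin n) := ⟨⟨0, hn⟩⟩
  obtain ⟨D, hD⟩ : ∃ D : Fin n → ℕ,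
      D = fun i => k / n + if i = i0 then k % n else 0 := ⟨_, rfl⟩
  obtain ⟨η, hη⟩ : ∃ η : Fin n → ℕ, η = fun i => ⌊(D i : ℝ) * xstar i⌋₊ := ⟨_, rfl⟩
  have hηD : ∀ i, η i ≤ D i := by
    intro i
    rw [hη]
    calc ⌊(D i : ℝ) * xstar i⌋₊ ≤ ⌊(D i : ℝ)⌋₊ :=
          Nat.floor_le_floor (by nlinarith [hx0 i, hx1 i, Nat.cast_nonneg (α := ℝ) (D i)])
      _ = D i := Nat.floor_natCast _
  obtain ⟨β, hβ⟩ : ∃ β : Fin n → ℕ, β = fun i => D i - η i := ⟨_, rfl⟩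
  have hηβ : ∀ i, η i + β i = D i := by
    intro i; rw [hβ]; exact Nat.add_sub_cancel' (hηD i)
  have hkn : ∀ i, k / n ≤ D i := by intro i; rw [hD]; exact Nat.le_add_right _ _
  have hsumD : ∑ i, D i = k := by
    rw [hD]
    rw [Finset.sum_add_distrib, Finset.sum_const, Finset.card_univ, Fintype.card_fin, smul_eq_mul,
      Finset.sum_ite_eq' Finset.univ i0 (fun _ => k % n), if_pos (Finset.mem_univ i0)]
    have := Nat.div_add_mod k n
    omega
  have hsum : (∑ i, η i) + (∑ i, β i) = k := by
    rw [← Finset.sum_add_distrib, ← hsumD]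
    exact Finset.sum_congr rfl fun i _ => hηβ i
  -- the candidate ratio
  set A : ℝ := (∫ x in Set.Icc (0 : Fin n → ℝ) 1,
      eval x f * ∏ i, x i ^ η i * (1 - x i) ^ β i) with hA
  set B : ℝ := (∫ x in Set.Icc (0 : Fin n → ℝ) 1,
      ∏ i, x i ^ η i * (1 - x i) ^ β i) with hB
  have hmem : A / B ∈ { r : ℝ | ∃ η β : Fin n → ℕ, (∑ i, η i) + (∑ i, β i) = k ∧
      r = (∫ x in Set.Icc (0 : Fin n → ℝ) 1,
              eval x f * ∏ i, x i ^ η i * (1 - x i) ^ β i) /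
          (∫ x in Set.Icc (0 : Fin n → ℝ) 1, ∏ i, x i ^ η i * (1 - x i) ^ β i) } :=
    ⟨η, β, hsum, rfl⟩
  have hbdd : BddBelow { r : ℝ | ∃ η β : Fin n → ℕ, (∑ i, η i) + (∑ i, β i) = k ∧
      r = (∫ x in Set.Icc (0 : Fin n → ℝ) 1,
              eval x f * ∏ i, x i ^ η i * (1 - x i) ^ β i) /
          (∫ x in Set.Icc (0 : Fin n → ℝ) 1, ∏ i, x i ^ η i * (1 - x i) ^ β i) } := by
    refine ⟨c, fun s hs => ?_⟩
    obtain ⟨η', β', -, rfl⟩ := hs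
    exact lower_bound f xstar hmin η' β'
  have h1 : fkH n f k ≤ A / B := csInf_le hbdd hmem
  -- value of the ratio
  have hrval : A / B = ∑ α ∈ f.support, coeff α f * ∏ i, mratio (η i) (β i) (α i) := by
    rw [hA, hB, numer_eq, denom_eq, Finset.sum_div]
    refine Finset.sum_congr rfl fun α _ => ?_
    have hprod : ∏ i, Bval (η i + α i) (β i)
        = (∏ i, mratio (η i) (β i) (α i)) * ∏ i, Bval (η i) (β i) := by
      rw [← Finset.prod_mul_distrib]
      exact Finset.prod_congr rfl fun i _ => Bval_shift (η i) (β i) (α i)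
    rw [hprod, mul_div_assoc,
      mul_div_cancel_right₀ _ (ne_of_gt (Finset.prod_pos fun i _ => Bval_pos _ _))]
  have hcval : c = ∑ α ∈ f.support, coeff α f * ∏ i, (xstar i) ^ (α i) := eval_eq' _ _
  -- per-α bound
  have hαbound : ∀ α : Fin n →₀ ℕ,
      |∏ i, mratio (η i) (β i) (α i) - ∏ i, (xstar i) ^ (α i)|
        ≤ (∑ i, 2 * ((α i : ℝ) + 1) ^ 2 * (2 * n)) / k := by
    intro α
    have tele := abs_prod_sub_prod Finset.univ
      (fun i => mratio (η i) (β i) (α i)) (fun i => (xstar i) ^ (α i))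
      (fun i _ => mratio_mem _ _ _)
      (fun i _ => ⟨pow_nonneg (hx0 i) _, pow_le_one₀ (hx0 i) (hx1 i)⟩)
    refine tele.trans ?_
    rw [Finset.sum_div]
    apply Finset.sum_le_sum
    intro i _
    have hcb := coord_bound' (D i) (α i) (η i) (β i) (hx0 i) (hx1 i)
      (by rw [hη]) (by rw [hβ])
    refine hcb.trans ?_
    have hDk : (k : ℝ) ≤ 2 * n * ((D i : ℝ) + 2) := by
      have h1' : n * (k / n) + k % n = k := Nat.div_add_mod k n
      have h2' : k % n < n := Nat.mod_lt _ hn0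
      have h3' : k ≤ 2 * (n * (k / n)) := by omega
      have h4' : k ≤ 2 * (n * D i) := by
        have := hkn i
        calc k ≤ 2 * (n * (k / n)) := h3'
          _ ≤ 2 * (n * D i) := by
            apply Nat.mul_le_mul_left
            exact Nat.mul_le_mul_left _ (hkn i)
      have : (k : ℝ) ≤ 2 * (n * D i) := by exact_mod_cast h4'
      nlinarith [Nat.cast_nonneg (α := ℝ) n]
    rw [div_le_div_iff₀ (by positivity) (by positivity)]
    have ha0 : (0:ℝ) ≤ 2 * ((α i : ℝ) + 1) ^ 2 := by positivity
    nlinarith [ha0, hDk]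
  -- assemble
  have hdiff : A / B - c
      = ∑ α ∈ f.support, coeff α f *
          (∏ i, mratio (η i) (β i) (α i) - ∏ i, (xstar i) ^ (α i)) := by
    rw [hrval, hcval, ← Finset.sum_sub_distrib]
    exact Finset.sum_congr rfl fun α _ => by ring
  have h2 : A / B - c ≤ C / k := by
    rw [hdiff, hCdef]
    calc ∑ α ∈ f.support, coeff α f *
          (∏ i, mratio (η i) (β i) (α i) - ∏ i, (xstar i) ^ (α i))
        ≤ |∑ α ∈ f.support, coeff α f *
            (∏ i, mratio (η i) (β i) (α i) - ∏ i, (xstar i) ^ (α i))| := le_abs_self _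
      _ ≤ ∑ α ∈ f.support, |coeff α f *
            (∏ i, mratio (η i) (β i) (α i) - ∏ i, (xstar i) ^ (α i))| :=
          Finset.abs_sum_le_sum_abs _ _
      _ ≤ ∑ α ∈ f.support, |coeff α f| *
            ((∑ i, 2 * ((α i : ℝ) + 1) ^ 2 * (2 * n)) / k) := by
          apply Finset.sum_le_sum
          intro α _
          rw [abs_mul]
          exact mul_le_mul_of_nonneg_left (hαbound α) (abs_nonneg _)
      _ = (∑ α ∈ f.support, |coeff α f| *
            ∑ i, 2 * ((α i : ℝ) + 1) ^ 2 * (2 * n)) / k := by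
          rw [Finset.sum_div]
          exact Finset.sum_congr rfl fun α _ => by ring
  have hsqrt : Real.sqrt k ≤ k := by
    have h1' : (1:ℝ) ≤ k := by exact_mod_cast hk0
    calc Real.sqrt k ≤ Real.sqrt ((k:ℝ)^2) := Real.sqrt_le_sqrt (by nlinarith)
      _ = k := Real.sqrt_sq (by positivity)
  have hsq0 : 0 < Real.sqrt k := Real.sqrt_pos.mpr (by exact_mod_cast hk0)
  have h3 : C / k ≤ (C + 1) / Real.sqrt k := by
    rw [div_le_div_iff₀ (by exact_mod_cast hk0) hsq0]
    nlinarith [hsqrt, hC0, hsq0]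
  calc fkH n f k - c ≤ A / B - c := by linarith
    _ ≤ C / k := h2
    _ ≤ (C + 1) / Real.sqrt k := h3
end

section
/- For the linear polynomial f(x) = Σ_{i=1}^n x_i on K = [0,1]^n (whose minimum over [0,1]^n is 0, attained at x* = 0), the bound f_k^H equals min over (η,β) ∈ ℕ^n × ℕ^n with |η| + |β| = k of Σ_{i=1}^n (η_i + 1)/(η_i + β_i + 2), and consequently f_k^H ≥ n/(k+2) for every integer k ≥ 1. In particular the O(1/k) convergence rate of f_k^H is tight. -/
open MvPolynomial MeasureTheory

lemma J_eq (b a : ℕ) : ∫ x in (0:ℝ)..1, x ^ a * (1 - x) ^ b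
    = (a.factorial * b.factorial : ℝ) / (a + b + 1).factorial := by
  induction b generalizing a with
  | zero =>
    simp only [pow_zero, mul_one, Nat.factorial_zero, Nat.add_zero, Nat.factorial_succ]
    rw [integral_pow, one_pow, zero_pow (Nat.succ_ne_zero a)]
    have : ((a:ℝ)+1) ≠ 0 := by positivity
    have h2 : ((a.factorial : ℝ)) ≠ 0 := by
      exact_mod_cast a.factorial_ne_zero
    field_simp
    push_cast; ring
  | succ b ih =>
    have hd : ∀ x ∈ Set.uIcc (0:ℝ) 1, HasDerivAt (fun x : ℝ => x^(a+1) * (1-x)^(b+1))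
        (((a:ℝ)+1) * (x^a * (1-x)^(b+1)) - ((b:ℝ)+1) * (x^(a+1) * (1-x)^b)) x := by
      intro x _
      have h1 : HasDerivAt (fun x : ℝ => x^(a+1)) (((a:ℝ)+1) * x^a) x := by
        simpa using hasDerivAt_pow (a+1) x
      have hs : HasDerivAt (fun x : ℝ => 1 - x) (-1) x := (hasDerivAt_id x).const_sub 1
      have h2 : HasDerivAt (fun x : ℝ => (1-x)^(b+1)) (-(((b:ℝ)+1) * (1-x)^b)) x := by
        have := (hasDerivAt_pow (b+1) (1-x)).comp x hs
        refine this.congr_deriv ?_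
        rw [Nat.add_sub_cancel]; push_cast; ring
      have := h1.mul h2
      refine this.congr_deriv ?_
      ring
    have h1 : IntervalIntegrable (fun x : ℝ => ((a:ℝ)+1) * (x^a * (1-x)^(b+1))) volume 0 1 :=
      (Continuous.intervalIntegrable (by fun_prop) _ _)
    have h2 : IntervalIntegrable (fun x : ℝ => ((b:ℝ)+1) * (x^(a+1) * (1-x)^b)) volume 0 1 :=
      (Continuous.intervalIntegrable (by fun_prop) _ _)
    have h0 := intervalIntegral.integral_eq_sub_of_hasDerivAt hd (h1.sub h2)
    rw [intervalIntegral.integral_sub h1 h2, intervalIntegral.integral_const_mul,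
      intervalIntegral.integral_const_mul, ih (a+1)] at h0
    simp only [one_pow, sub_self, zero_pow (Nat.succ_ne_zero b), mul_zero, zero_pow
      (Nat.succ_ne_zero a), zero_mul, sub_zero] at h0
    have ha : ((a:ℝ)+1) ≠ 0 := by positivity
    have hfac : ∀ m : ℕ, ((m.factorial : ℝ)) ≠ 0 := fun m => by exact_mod_cast m.factorial_ne_zero
    have hidx : a + 1 + b + 1 = a + (b+1) + 1 := by omega
    rw [hidx] at h0
    have h3 : (∫ x in (0:ℝ)..1, x ^ a * (1 - x) ^ (b+1))
        = ((b:ℝ)+1) * ((((a+1).factorial : ℝ) * b.factorial) / ((a + (b+1) + 1).factorial)) / ((a:ℝ)+1) := by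
      field_simp at h0 ⊢
      linarith [h0]
    rw [h3, Nat.factorial_succ a, Nat.factorial_succ b]
    field_simp
    ring
    push_cast; ring

noncomputable def Ival (a b : ℕ) : ℝ := (a.factorial * b.factorial : ℝ) / (a + b + 1).factorial

lemma Ival_pos (a b : ℕ) : 0 < Ival a b := by
  unfold Ival
  have h1 := a.factorial_pos
  have h2 := b.factorial_pos
  have h3 := (a+b+1).factorial_pos
  positivity

lemma I_eq (a b : ℕ) : ∫ t in Set.Icc (0:ℝ) 1, t ^ a * (1 - t) ^ b = Ival a b := by
  rw [integral_Icc_eq_integral_Ioc, ← intervalIntegral.integral_of_le zero_le_one]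
  exact J_eq b a

lemma Ival_succ (a b : ℕ) : Ival (a+1) b = (((a:ℝ)+1) / ((a:ℝ)+(b:ℝ)+2)) * Ival a b := by
  unfold Ival
  have hidx : a + 1 + b + 1 = (a + b + 1) + 1 := by omega
  rw [hidx, Nat.factorial_succ (a+b+1), Nat.factorial_succ a]
  have hfac : ∀ m : ℕ, ((m.factorial : ℝ)) ≠ 0 := fun m => by exact_mod_cast m.factorial_ne_zero
  have h2 : ((a:ℝ)+(b:ℝ)+2) ≠ 0 := by positivity
  push_cast
  field_simp
  ring

lemma box_prod_integral {n : ℕ} (g : Fin n → ℝ → ℝ) :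
    ∫ x in Set.Icc (0 : Fin n → ℝ) 1, ∏ i, g i (x i)
      = ∏ i, ∫ t in Set.Icc (0:ℝ) 1, g i t := by
  have hIcc : Set.Icc (0 : Fin n → ℝ) 1 = Set.pi Set.univ (fun _ => Set.Icc (0:ℝ) 1) := by
    ext x
    simp [Set.mem_pi, Pi.le_def, Set.mem_Icc, forall_and]
  rw [hIcc, ← MeasureTheory.integral_indicator (MeasurableSet.univ_pi fun _ => measurableSet_Icc)]
  have hind : ∀ x : Fin n → ℝ,
      (Set.pi Set.univ (fun _ => Set.Icc (0:ℝ) 1)).indicator (fun x => ∏ i, g i (x i)) x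
        = ∏ i, (Set.Icc (0:ℝ) 1).indicator (g i) (x i) := by
    intro x
    by_cases h : ∀ i, x i ∈ Set.Icc (0:ℝ) 1
    · rw [Set.indicator_of_mem (Set.mem_univ_pi.2 h)]
      exact Finset.prod_congr rfl fun i _ => (Set.indicator_of_mem (h i) _).symm
    · push_neg at h
      obtain ⟨i, hi⟩ := h
      have h1 : x ∉ Set.pi Set.univ (fun _ => Set.Icc (0:ℝ) 1) := by
        simp only [Set.mem_univ_pi, not_forall]
        exact ⟨i, hi⟩
      rw [Set.indicator_of_notMem h1]
      exact (Finset.prod_eq_zero (Finset.mem_univ i) (Set.indicator_of_notMem hi (g i))).symm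
  simp_rw [hind]
  rw [volume_pi, MeasureTheory.integral_fintype_prod_eq_prod
    (f := fun i => (Set.Icc (0:ℝ) 1).indicator (g i))]
  exact Finset.prod_congr rfl fun i _ => integral_indicator measurableSet_Icc

lemma key_ratio {n : ℕ} (η β : Fin n → ℕ) :
    (∫ x in Set.Icc (0 : Fin n → ℝ) 1,
        eval x (∑ i, (X i : MvPolynomial (Fin n) ℝ)) * ∏ i, x i ^ η i * (1 - x i) ^ β i) /
    (∫ x in Set.Icc (0 : Fin n → ℝ) 1, ∏ i, x i ^ η i * (1 - x i) ^ β i)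
      = ∑ i, ((η i : ℝ) + 1) / ((η i : ℝ) + (β i : ℝ) + 2) := by
  have hD : (∫ x in Set.Icc (0 : Fin n → ℝ) 1, ∏ i, x i ^ η i * (1 - x i) ^ β i)
      = ∏ i, Ival (η i) (β i) := by
    rw [box_prod_integral (fun i t => t ^ η i * (1 - t) ^ β i)]
    exact Finset.prod_congr rfl fun i _ => I_eq (η i) (β i)
  have hev : ∀ x : Fin n → ℝ,
      eval x (∑ i, (X i : MvPolynomial (Fin n) ℝ)) = ∑ i, x i := by
    intro x; simp
  have hsplit : ∀ x : Fin n → ℝ, (∑ i, x i) * ∏ j, (x j ^ η j * (1 - x j) ^ β j)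
      = ∑ i, ∏ j, ((if j = i then x j else 1) * (x j ^ η j * (1 - x j) ^ β j)) := by
    intro x
    rw [Finset.sum_mul]
    refine Finset.sum_congr rfl fun i _ => ?_
    conv_rhs => rw [Finset.prod_mul_distrib, Finset.prod_ite_eq' Finset.univ i (fun j => x j)]
    simp
  have hN : (∫ x in Set.Icc (0 : Fin n → ℝ) 1,
        eval x (∑ i, (X i : MvPolynomial (Fin n) ℝ)) * ∏ i, x i ^ η i * (1 - x i) ^ β i)
      = (∑ i, ((η i : ℝ) + 1) / ((η i : ℝ) + (β i : ℝ) + 2)) * ∏ i, Ival (η i) (β i) := by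
    simp_rw [hev, hsplit]
    rw [integral_finset_sum]
    · have h1 : ∀ i : Fin n, (∫ x in Set.Icc (0 : Fin n → ℝ) 1,
          ∏ j, ((if j = i then x j else 1) * (x j ^ η j * (1 - x j) ^ β j)))
          = (((η i : ℝ) + 1) / ((η i : ℝ) + (β i : ℝ) + 2)) * ∏ j, Ival (η j) (β j) := by
        intro i
        rw [box_prod_integral (fun j t => (if j = i then t else 1) * (t ^ η j * (1 - t) ^ β j))]
        have h2 : ∀ j : Fin n, (∫ t in Set.Icc (0:ℝ) 1,
            (if j = i then t else 1) * (t ^ η j * (1 - t) ^ β j))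
            = (if j = i then ((η j : ℝ) + 1) / ((η j : ℝ) + (β j : ℝ) + 2) else 1)
              * Ival (η j) (β j) := by
          intro j
          by_cases hj : j = i
          · subst hj
            simp only [eq_self_iff_true, if_true]
            rw [← Ival_succ, ← I_eq (η j + 1) (β j)]
            refine setIntegral_congr_fun measurableSet_Icc fun t _ => ?_
            ring
          · simp only [if_neg hj, one_mul]
            exact I_eq (η j) (β j)
        rw [Finset.prod_congr rfl fun j _ => h2 j, Finset.prod_mul_distrib,
          Finset.prod_ite_eq' Finset.univ i
            (fun j => ((η j : ℝ) + 1) / ((η j : ℝ) + (β j : ℝ) + 2))]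
        simp
      rw [Finset.sum_congr rfl fun i _ => h1 i, ← Finset.sum_mul]
    · intro i _
      apply ContinuousOn.integrableOn_compact isCompact_Icc
      apply Continuous.continuousOn
      apply continuous_finset_prod
      intro j _
      by_cases hj : j = i
      · subst hj
        simp only [eq_self_iff_true, if_true]
        fun_prop
      · simp only [if_neg hj, one_mul]
        fun_prop
  rw [hN, hD, mul_div_assoc,
    div_self (ne_of_gt (Finset.prod_pos fun i _ => Ival_pos _ _)), mul_one]

theorem fkH_linear_example
    {n : ℕ} (hn : 1 ≤ n) (k : ℕ) (hk : 1 ≤ k) :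
    fkH n (∑ i, X i) k =
      sInf { r : ℝ | ∃ η β : Fin n → ℕ, (∑ i, η i) + (∑ i, β i) = k ∧
        r = ∑ i, ((η i : ℝ) + 1) / ((η i : ℝ) + (β i : ℝ) + 2) } ∧
    (n : ℝ) / (k + 2) ≤ fkH n (∑ i, X i) k := by
  have hset : { r : ℝ | ∃ η β : Fin n → ℕ, (∑ i, η i) + (∑ i, β i) = k ∧
      r = (∫ x in Set.Icc (0 : Fin n → ℝ) 1,
              eval x (∑ i, (X i : MvPolynomial (Fin n) ℝ)) * ∏ i, x i ^ η i * (1 - x i) ^ β i) /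
          (∫ x in Set.Icc (0 : Fin n → ℝ) 1, ∏ i, x i ^ η i * (1 - x i) ^ β i) }
      = { r : ℝ | ∃ η β : Fin n → ℕ, (∑ i, η i) + (∑ i, β i) = k ∧
        r = ∑ i, ((η i : ℝ) + 1) / ((η i : ℝ) + (β i : ℝ) + 2) } := by
    ext r
    simp only [Set.mem_setOf_eq]
    constructor
    · rintro ⟨η, β, h1, rfl⟩
      exact ⟨η, β, h1, key_ratio η β⟩
    · rintro ⟨η, β, h1, rfl⟩
      exact ⟨η, β, h1, (key_ratio η β).symm⟩
  have hfk : fkH n (∑ i, X i) k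
      = sInf { r : ℝ | ∃ η β : Fin n → ℕ, (∑ i, η i) + (∑ i, β i) = k ∧
        r = ∑ i, ((η i : ℝ) + 1) / ((η i : ℝ) + (β i : ℝ) + 2) } := by
    rw [fkH, hset]
  refine ⟨hfk, ?_⟩
  rw [hfk]
  have i0 : Fin n := ⟨0, hn⟩
  refine le_csInf ⟨_, fun j => if j = i0 then k else 0, fun _ => 0, by
    simp [Finset.sum_ite_eq'], rfl⟩ ?_
  rintro r ⟨η, β, h1, rfl⟩
  have hβ : ∀ i, (β i : ℝ) ≤ k := by
    intro i
    have : β i ≤ k := le_trans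
      (Finset.single_le_sum (fun j _ => Nat.zero_le (β j)) (Finset.mem_univ i)) (by omega)
    exact_mod_cast this
  calc (n : ℝ) / (k + 2) = ∑ _i : Fin n, 1 / ((k:ℝ) + 2) := by
        rw [Finset.sum_const, Finset.card_univ, Fintype.card_fin, nsmul_eq_mul]
        ring
    _ ≤ ∑ i, ((η i : ℝ) + 1) / ((η i : ℝ) + (β i : ℝ) + 2) := by
        refine Finset.sum_le_sum fun i _ => ?_
        rw [div_le_div_iff₀ (by positivity) (by positivity)]
        have h0 : (0:ℝ) ≤ (η i : ℝ) := Nat.cast_nonneg _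
        have hk' : (1:ℝ) ≤ (k:ℝ) := by exact_mod_cast hk
        nlinarith [hβ i]
end
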